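/- Let μ be a positive linear functional on Mₙ(ℂ) and let a, b ∈ Mₙ(ℂ) be such that a*b lies in the centralizer M^μ = { y : μ(xy) = μ(yx) for all x }. Then the fidelity satisfies F(μ^a, μ^b) = μ(|a*b|), where μ^z(x) = μ(z* x z) and, with W, R the positive semidefinite matrices representing μ^a and μ^b against the trace, F(μ^a, μ^b) = tr((√W R √W)^{1/2}). -/

import Mathlib

open Matrix ComplexOrder

namespace Matrix.PosSemidef
variable {n 𝕜 : Type*} [Fintype n] [DecidableEq n] [RCLike 𝕜] {A : Matrix n n 𝕜}

/-- The positive semidefinite square root of a positive semidefinite matrix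
(Mathlib's definition of December 2024, removed since). -/
noncomputable def sqrt (hA : A.PosSemidef) : Matrix n n 𝕜 :=
  hA.1.eigenvectorUnitary.1 * diagonal ((↑) ∘ (√·) ∘ hA.1.eigenvalues) *
  (star hA.1.eigenvectorUnitary : Matrix n n 𝕜)

theorem sqrt_isHermitian (hA : A.PosSemidef) : hA.sqrt.IsHermitian := by
  unfold sqrt
  rw [IsHermitian, conjTranspose_mul, conjTranspose_mul, diagonal_conjTranspose]
  simp only [Matrix.star_eq_conjTranspose, conjTranspose_conjTranspose, Matrix.mul_assoc]
  congr 3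
  funext i
  simp

end Matrix.PosSemidef

open Matrix ComplexOrder Polynomial

variable {n : Type*} [Fintype n] [DecidableEq n]

lemma trace_ext {M N : Matrix n n ℂ} (h : ∀ x, (M * x).trace = (N * x).trace) : M = N := by
  ext i j
  have := h (single j i 1)
  simpa [Matrix.trace, Matrix.mul_apply, Matrix.single, Matrix.diag, ite_and,
    Finset.sum_ite_eq, Finset.sum_ite_eq'] using this

lemma commute_aeval {A B : Matrix n n ℂ} (h : Commute B A) (p : ℝ[X]) :
    Commute B (aeval A p) := by
  rw [aeval_eq_sum_range]
  exact Commute.sum_right _ _ _ fun i _ => (h.pow_right i).smul_right _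

lemma sqrt_eq_cfc {A : Matrix n n ℂ} (hA : A.PosSemidef) : hA.sqrt = cfc Real.sqrt A := by
  rw [Matrix.IsHermitian.cfc_eq hA.1]
  rfl

lemma Matrix.PosSemidef.posSemidef_sqrt {A : Matrix n n ℂ} (hA : A.PosSemidef) :
    hA.sqrt.PosSemidef := by
  have hd : (diagonal ((↑) ∘ (√·) ∘ hA.1.eigenvalues) : Matrix n n ℂ).PosSemidef := by
    rw [posSemidef_diagonal_iff]
    intro i
    simp only [Function.comp_apply]
    exact_mod_cast Real.sqrt_nonneg _
  have h := hd.mul_mul_conjTranspose_same hA.1.eigenvectorUnitary.1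
  exact h

lemma Matrix.PosSemidef.sqrt_mul_self {A : Matrix n n ℂ} (hA : A.PosSemidef) :
    hA.sqrt * hA.sqrt = A := by
  rw [sqrt_eq_cfc, ← cfc_mul Real.sqrt Real.sqrt A]
  conv_rhs => rw [← cfc_id' ℝ A hA.1]
  refine cfc_congr fun x hx => ?_
  obtain ⟨i, rfl⟩ := (hA.1.spectrum_real_eq_range_eigenvalues ▸ hx)
  exact Real.mul_self_sqrt (hA.eigenvalues_nonneg i)

lemma Matrix.PosSemidef.eq_sqrt_of_sq_eq {A B : Matrix n n ℂ} (hA : A.PosSemidef)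
    (hB : B.PosSemidef) (h : A ^ 2 = B) : A = hB.sqrt := by
  rw [sqrt_eq_cfc, ← h]
  refine Eq.trans ?_ (cfc_comp_pow Real.sqrt 2 A (ha := hA.1))
  conv_lhs => rw [← cfc_id' ℝ A hA.1]
  refine cfc_congr fun x hx => ?_
  obtain ⟨i, rfl⟩ := (hA.1.spectrum_real_eq_range_eigenvalues ▸ hx)
  exact (Real.sqrt_sq (hA.eigenvalues_nonneg i)).symm

lemma sqrt_eq_aeval {A : Matrix n n ℂ} (hA : A.PosSemidef) (p : ℝ[X])
    (hp : ∀ i, p.eval (hA.1.eigenvalues i) = Real.sqrt (hA.1.eigenvalues i)) :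
    hA.sqrt = aeval A p := by
  rw [sqrt_eq_cfc, ← cfc_polynomial p A hA.1]
  refine cfc_congr fun x hx => ?_
  obtain ⟨i, rfl⟩ := (hA.1.spectrum_real_eq_range_eigenvalues ▸ hx)
  exact (hp i).symm

lemma exists_interp (s : Finset ℝ) : ∃ p : ℝ[X], ∀ x ∈ s, p.eval x = Real.sqrt x :=
  ⟨Lagrange.interpolate s id Real.sqrt,
    fun x hx => Lagrange.eval_interpolate_at_node Real.sqrt (Set.injOn_id _) hx⟩

lemma commute_sqrt {A B : Matrix n n ℂ} (hA : A.PosSemidef) (h : Commute B A) :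
    Commute B hA.sqrt := by
  obtain ⟨p, hp⟩ := exists_interp (Finset.univ.image hA.1.eigenvalues)
  rw [sqrt_eq_aeval hA p fun i => hp _ (Finset.mem_image_of_mem _ (Finset.mem_univ i))]
  exact commute_aeval h p

lemma posSemidef_mul_of_commute {A B : Matrix n n ℂ} (hA : A.PosSemidef) (hB : B.PosSemidef)
    (h : Commute A B) : (A * B).PosSemidef := by
  have hc : Commute hA.sqrt B := (commute_sqrt hA h.symm).symm
  have key : hA.sqrt * B * hA.sqrtᴴ = A * B := by
    rw [hA.posSemidef_sqrt.1, mul_assoc, ← hc.eq, ← mul_assoc, hA.sqrt_mul_self]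
  rw [← key]
  exact hB.mul_mul_conjTranspose_same hA.sqrt

lemma sqrt_congr {A B : Matrix n n ℂ} (h : A = B) (hA : A.PosSemidef) (hB : B.PosSemidef) :
    hA.sqrt = hB.sqrt := by subst h; rfl

lemma sqrt_mul_of_commute {A B : Matrix n n ℂ} (hA : A.PosSemidef) (hB : B.PosSemidef)
    (h : Commute A B) (hAB : (A * B).PosSemidef) : hAB.sqrt = hA.sqrt * hB.sqrt := by
  have h1 : Commute hA.sqrt B := (commute_sqrt hA h.symm).symm
  have h2 : Commute hA.sqrt hB.sqrt := commute_sqrt hB h1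
  have hP : (hA.sqrt * hB.sqrt).PosSemidef :=
    posSemidef_mul_of_commute hA.posSemidef_sqrt hB.posSemidef_sqrt h2
  have hsq : (hA.sqrt * hB.sqrt) ^ 2 = A * B := by
    rw [pow_two, mul_assoc hA.sqrt hB.sqrt, ← mul_assoc hB.sqrt hA.sqrt, ← h2.eq,
      mul_assoc hA.sqrt hB.sqrt, hB.sqrt_mul_self, ← mul_assoc, hA.sqrt_mul_self]
  exact (hP.eq_sqrt_of_sq_eq hAB hsq).symm

lemma trace_pow_comm (X : Matrix n n ℂ) (k : ℕ) :
    ((X * Xᴴ) ^ k).trace = ((Xᴴ * X) ^ k).trace := by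
  cases k with
  | zero => simp
  | succ k =>
    have h : ∀ m : ℕ, (X * Xᴴ) ^ (m + 1) = X * ((Xᴴ * X) ^ m * Xᴴ) := by
      intro m
      induction m with
      | zero => simp [pow_succ, mul_assoc]
      | succ m ih =>
        rw [pow_succ, ih]
        simp only [pow_succ, mul_assoc]
    rw [h k, Matrix.trace_mul_comm, pow_succ]
    simp only [mul_assoc]

lemma trace_aeval_comm (X : Matrix n n ℂ) (p : ℝ[X]) :
    (aeval (X * Xᴴ) p).trace = (aeval (Xᴴ * X) p).trace := by
  rw [aeval_eq_sum_range' (n := p.natDegree + 1) (lt_add_one _),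
    aeval_eq_sum_range' (n := p.natDegree + 1) (lt_add_one _)]
  simp only [Matrix.trace_sum, Matrix.trace_smul]
  exact Finset.sum_congr rfl fun i _ => by rw [trace_pow_comm]

lemma trace_sqrt_comm (X : Matrix n n ℂ) :
    (posSemidef_self_mul_conjTranspose X).sqrt.trace
      = (posSemidef_conjTranspose_mul_self X).sqrt.trace := by
  obtain ⟨p, hp⟩ := exists_interp
    ((Finset.univ.image (posSemidef_self_mul_conjTranspose X).1.eigenvalues) ∪
     (Finset.univ.image (posSemidef_conjTranspose_mul_self X).1.eigenvalues))
  rw [sqrt_eq_aeval _ p fun i => hp _ (Finset.mem_union_left _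
      (Finset.mem_image_of_mem _ (Finset.mem_univ i))),
    sqrt_eq_aeval _ p fun i => hp _ (Finset.mem_union_right _
      (Finset.mem_image_of_mem _ (Finset.mem_univ i))),
    trace_aeval_comm]

/-- The modulus `|x| = (xᴴ x)^{1/2}` of a square complex matrix. -/
noncomputable def matAbs (x : Matrix n n ℂ) : Matrix n n ℂ :=
  (Matrix.posSemidef_conjTranspose_mul_self x).sqrt

theorem sqrt_sandwich_posSemidef {W R : Matrix n n ℂ} (hW : W.PosSemidef) (hR : R.PosSemidef) :
    (hW.sqrt * R * hW.sqrt).PosSemidef := by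
  have h := hR.mul_mul_conjTranspose_same hW.sqrt
  rwa [hW.sqrt_isHermitian] at h

/-- The fidelity `F(W,R) = tr ((W^{1/2} R W^{1/2})^{1/2})`. -/
noncomputable def fidelity {W R : Matrix n n ℂ} (hW : W.PosSemidef) (hR : R.PosSemidef) : ℝ :=
  ((sqrt_sandwich_posSemidef hW hR).sqrt.trace).re

/-- for a positive linear functional `μ = tr(D ·)` and `a, b` with `a*b`
in the centralizer of `μ`, the fidelity of the density matrices `a D aᴴ`, `b D bᴴ`
representing `μ^a`, `μ^b` equals `μ(|a*b|)`. -/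
theorem fidelity_centralizer {d : ℕ} (D a b : Matrix (Fin d) (Fin d) ℂ)
    (hD : D.PosSemidef)
    (hcent : ∀ x : Matrix (Fin d) (Fin d) ℂ,
      (D * (x * (aᴴ * b))).trace = (D * ((aᴴ * b) * x)).trace) :
    fidelity (hD.mul_mul_conjTranspose_same a) (hD.mul_mul_conjTranspose_same b)
      = ((D * matAbs (aᴴ * b)).trace).re := by
  have hW := hD.mul_mul_conjTranspose_same a
  have hR := hD.mul_mul_conjTranspose_same b
  obtain ⟨c, hcdef⟩ : ∃ c, c = aᴴ * b := ⟨_, rfl⟩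
  rw [← hcdef] at hcent ⊢
  have hcH : cᴴ = bᴴ * a := by
    rw [hcdef, conjTranspose_mul, conjTranspose_conjTranspose]
  have hDc : D * c = c * D := trace_ext fun x => by
    calc (D * c * x).trace = (D * (c * x)).trace := by rw [mul_assoc]
      _ = (D * (x * c)).trace := (hcent x).symm
      _ = (D * x * c).trace := by rw [mul_assoc]
      _ = (c * (D * x)).trace := Matrix.trace_mul_comm _ _
      _ = (c * D * x).trace := by rw [mul_assoc]
  have hDcH : D * cᴴ = cᴴ * D := by
    have h := congrArg conjTranspose hDc
    simpa [conjTranspose_mul, hD.1.eq] using h.symm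
  have hsDc : c * hD.sqrt = hD.sqrt * c := (commute_sqrt hD hDc.symm).eq
  have hsDcH : cᴴ * hD.sqrt = hD.sqrt * cᴴ := (commute_sqrt hD hDcH.symm).eq
  have hDsD : D * hD.sqrt = hD.sqrt * D := (commute_sqrt hD (Commute.refl D)).eq
  have hDcc : D * (cᴴ * c) = (cᴴ * c) * D := by
    rw [← mul_assoc, hDcH, mul_assoc, hDc, mul_assoc]
  set Y : Matrix (Fin d) (Fin d) ℂ := hW.sqrt * (b * hD.sqrt) with hY
  have hYY : Y * Yᴴ = hW.sqrt * (b * D * bᴴ) * hW.sqrt := by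
    simp only [hY, conjTranspose_mul, hW.posSemidef_sqrt.1.eq, hD.posSemidef_sqrt.1.eq,
      mul_assoc]
    rw [← mul_assoc hD.sqrt hD.sqrt, hD.sqrt_mul_self]
  have hYHY : Yᴴ * Y = (cᴴ * c) * (D * D) := by
    have e0 : Yᴴ * Y = hD.sqrt * (bᴴ * (hW.sqrt * (hW.sqrt * (b * hD.sqrt)))) := by
      simp only [hY, conjTranspose_mul, hW.posSemidef_sqrt.1.eq, hD.posSemidef_sqrt.1.eq,
        mul_assoc]
    rw [e0, ← mul_assoc hW.sqrt hW.sqrt, hW.sqrt_mul_self]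
    simp only [mul_assoc]
    rw [show aᴴ * (b * hD.sqrt) = c * hD.sqrt by rw [hcdef, mul_assoc]]
    rw [show bᴴ * (a * (D * (c * hD.sqrt))) = cᴴ * (D * (c * hD.sqrt)) by
      rw [hcH, mul_assoc]]
    rw [hsDc, ← mul_assoc D hD.sqrt c, hDsD, mul_assoc hD.sqrt D c]
    rw [← mul_assoc cᴴ hD.sqrt (D * c), hsDcH, mul_assoc hD.sqrt cᴴ (D * c)]
    rw [← mul_assoc hD.sqrt hD.sqrt, hD.sqrt_mul_self]
    rw [hDc, ← mul_assoc cᴴ c D, ← mul_assoc D (cᴴ * c) D, hDcc]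
    simp only [mul_assoc]
  have hCC := posSemidef_conjTranspose_mul_self c
  have hDD : (D * D).PosSemidef := by have h := hD.pow 2; rwa [pow_two] at h
  have hcomm : Commute (cᴴ * c) (D * D) := Commute.mul_right hDcc.symm hDcc.symm
  have hProd : ((cᴴ * c) * (D * D)).PosSemidef := posSemidef_mul_of_commute hCC hDD hcomm
  have key : (sqrt_sandwich_posSemidef hW hR).sqrt.trace = (D * matAbs c).trace := by
    rw [sqrt_congr hYY.symm (sqrt_sandwich_posSemidef hW hR)
      (posSemidef_self_mul_conjTranspose Y)]
    rw [trace_sqrt_comm Y]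
    rw [sqrt_congr hYHY (posSemidef_conjTranspose_mul_self Y) hProd]
    rw [sqrt_mul_of_commute hCC hDD hcomm hProd]
    rw [← hD.eq_sqrt_of_sq_eq hDD (pow_two D)]
    rw [Matrix.trace_mul_comm]
    rfl
  exact congrArg Complex.re key
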